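/- Let K be a field of characteristic 0, n ≥ 2 a natural number, δ ∈ K, and set m = (n−1)(n−2)/2. Let u : ℕ → K[X] be any sequence of polynomials with u 0 = 1, u 1 = X and u(k+2) = X·u(k+1) − u(k) for all k. Let M be the square matrix of size (n−1) + (n−1) + m with blocks: the (1,1)-block the (n−1)×(n−1) tridiagonal matrix with δ on the diagonal and 1 on the sub- and superdiagonals; the (1,2)- and (2,1)-blocks δ times the identity of size n−1; the (2,2)-block δ² times the identity of size n−1; the (3,3)-block δ² times the identity of size m; all other blocks zero. Then: if δ ≠ 0 and (u(n−1)).eval(δ − 1) ≠ 0 then rank M = (n² + n − 2)/2 (full rank); if δ ≠ 0 and (u(n−1)).eval(δ − 1) = 0 then rank M = (n² + n − 4)/2; if δ = 0 and n is odd then rank M = n − 1; and if δ = 0 and n is even then rank M = n − 2. -/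

import Mathlib

open Matrix

section Aux

variable {K : Type*} [Field K]

/-- Tridiagonal matrix with `x` on the diagonal and `1` on the off-diagonals. -/
def triMat (x : K) (k : ℕ) : Matrix (Fin k) (Fin k) K :=
  Matrix.of fun i j =>
    if i = j then x
    else if (i : ℕ) + 1 = (j : ℕ) ∨ (j : ℕ) + 1 = (i : ℕ) then (1 : K) else 0

lemma triMat_submatrix_succ (x : K) (k : ℕ) :
    (triMat x (k + 1)).submatrix Fin.succ Fin.succ = triMat x k := by
  ext i j
  have h1 : (i.succ = j.succ) ↔ (i = j) := Fin.succ_inj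
  have h2 : ((i.succ : ℕ) + 1 = (j.succ : ℕ) ∨ (j.succ : ℕ) + 1 = (i.succ : ℕ)) ↔
      ((i : ℕ) + 1 = (j : ℕ) ∨ (j : ℕ) + 1 = (i : ℕ)) := by
    simp only [Fin.val_succ]; omega
  simp only [triMat, submatrix_apply, of_apply, h1, h2]

lemma det_triMat_succ_succ (x : K) (k : ℕ) :
    (triMat x (k + 2)).det = x * (triMat x (k + 1)).det - (triMat x k).det := by
  set A := triMat x (k + 2) with hA
  rw [Matrix.det_succ_row_zero, Fin.sum_univ_succ, Fin.sum_univ_succ]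
  have e00 : A 0 0 = x := by simp [hA, triMat]
  have e01 : A 0 ((0 : Fin (k+1)).succ) = 1 := by
    simp [hA, triMat, Fin.ext_iff]
  have erest : ∀ j : Fin k, A 0 (j.succ.succ) = 0 := by
    intro j
    have : ¬ ((0:Fin (k+2)) = j.succ.succ) := by simp [Fin.ext_iff]
    simp [hA, triMat, this, Fin.ext_iff]
  have hsum0 : (∑ j : Fin k, (-1 : K) ^ ((j.succ.succ : Fin (k+2)) : ℕ) *
      A 0 j.succ.succ * (A.submatrix Fin.succ (j.succ.succ).succAbove).det) = 0 := by
    apply Finset.sum_eq_zero; intro j _; rw [erest]; ring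
  rw [hsum0, e00, e01]
  have m0 : (A.submatrix Fin.succ ((0 : Fin (k+2)).succAbove)).det = (triMat x (k+1)).det := by
    rw [Fin.succAbove_zero, triMat_submatrix_succ]
  have m1 : (A.submatrix Fin.succ ((1 : Fin (k+2)).succAbove)).det = (triMat x k).det := by
    set B := A.submatrix Fin.succ ((1 : Fin (k+2)).succAbove) with hB
    rw [Matrix.det_succ_column_zero, Fin.sum_univ_succ]
    have hsa0 : (1 : Fin (k+2)).succAbove 0 = 0 := by
      rw [Fin.succAbove_of_castSucc_lt]
      · rfl
      · simp [Fin.lt_def]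
    have b00 : B 0 0 = 1 := by
      simp [hB, hA, triMat, hsa0, Fin.ext_iff]
    have brest : ∀ i : Fin k, B i.succ 0 = 0 := by
      intro i
      simp [hB, hA, triMat, hsa0, Fin.ext_iff]
    have hsumB : (∑ i : Fin k, (-1 : K) ^ ((i.succ : Fin (k+1)) : ℕ) *
        B i.succ 0 * (B.submatrix (i.succ).succAbove Fin.succ).det) = 0 := by
      apply Finset.sum_eq_zero; intro i _; rw [brest]; ring
    rw [hsumB, b00]
    have : B.submatrix ((0 : Fin (k+1)).succAbove) Fin.succ = triMat x k := by
      rw [Fin.succAbove_zero, hB, Matrix.submatrix_submatrix]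
      have hcol : ((1 : Fin (k+2)).succAbove ∘ Fin.succ) = (Fin.succ ∘ Fin.succ : Fin k → Fin (k+2)) := by
        funext j
        simp only [Function.comp_apply]
        have hle : (1 : Fin (k+2)) ≤ (j.succ).castSucc := by simp [Fin.le_def]
        rw [Fin.succAbove_of_le_castSucc _ _ hle]
      rw [hcol, hA, show (Fin.succ ∘ Fin.succ : Fin k → Fin (k+2)) = fun i => (i.succ).succ from rfl]
      rw [show (triMat x (k+2)).submatrix (fun i : Fin k => i.succ.succ) (fun i : Fin k => i.succ.succ)
            = ((triMat x (k+2)).submatrix Fin.succ Fin.succ).submatrix Fin.succ Fin.succ from rfl]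
      rw [triMat_submatrix_succ, triMat_submatrix_succ]
    rw [this]
    simp
  rw [m0, show (0 : Fin (k+1)).succ = (1 : Fin (k+2)) from Fin.succ_zero_eq_one, m1]
  simp [Fin.val_succ]
  ring

lemma rank_submatrix_le'' {m n p q : Type*} [Fintype m] [Fintype n] [Fintype p] [Fintype q]
    [DecidableEq m] [DecidableEq n] (A : Matrix m n K) (f : p → m) (g : q → n) :
    (A.submatrix f g).rank ≤ A.rank := by
  have hrepr : A.submatrix f g =
      ((1 : Matrix m m K).submatrix f id) * A * ((1 : Matrix n n K).submatrix id g) := by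
    ext i j
    simp [Matrix.mul_apply, Matrix.one_apply, Finset.sum_ite_eq, Finset.sum_ite_eq',
      ite_and, submatrix_apply]
  rw [hrepr]
  exact le_trans (Matrix.rank_mul_le_left _ _) (Matrix.rank_mul_le_right _ _)

lemma rank_lt_of_det_eq_zero {s : ℕ} (A : Matrix (Fin s) (Fin s) K) (h : A.det = 0)
    (hs : 0 < s) : A.rank < s := by
  have hle : A.rank ≤ s := A.rank_le_card_width.trans (Fintype.card_fin s).le
  rcases lt_or_eq_of_le hle with h' | h'
  · exact h'
  exfalso
  have htop : LinearMap.range A.mulVecLin = ⊤ := by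
    apply Submodule.eq_top_of_finrank_eq
    rw [← Matrix.rank, h', Module.finrank_pi, Fintype.card_fin]
  have hsurj : Function.Surjective A.mulVec := by
    intro v
    obtain ⟨w, hw⟩ := LinearMap.range_eq_top.mp htop v
    exact ⟨w, hw⟩
  have h1 : IsUnit A := Matrix.mulVec_surjective_iff_isUnit.mp hsurj
  have h2 : IsUnit A.det := A.isUnit_iff_isUnit_det.mp h1
  rw [h] at h2
  exact h2.ne_zero rfl

lemma rank_triMat_le (x : K) (k : ℕ) : k ≤ (triMat x (k + 1)).rank := by
  set B := (triMat x (k + 1)).submatrix (Fin.castSucc) (Fin.succ) with hB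
  have hdet : B.det = 1 := by
    have htri : B.BlockTriangular OrderDual.toDual := by
      intro i j hij
      have hij' : (i : ℕ) < (j : ℕ) := hij
      simp [hB, triMat, Fin.ext_iff]
      rw [if_neg (by omega), if_neg (by omega)]
    rw [Matrix.det_of_lowerTriangular B htri]
    apply Finset.prod_eq_one
    intro i _
    simp [hB, triMat, Fin.ext_iff]
  have hrankB : B.rank = k := by
    rw [Matrix.rank_of_isUnit _ (Matrix.isUnit_iff_isUnit_det _ |>.mpr (hdet ▸ isUnit_one)),
      Fintype.card_fin]
  calc k = B.rank := hrankB.symm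
    _ ≤ (triMat x (k + 1)).rank := rank_submatrix_le'' _ _ _

lemma rank_triMat_of_det_ne_zero {x : K} {k : ℕ} (h : (triMat x k).det ≠ 0) :
    (triMat x k).rank = k := by
  rw [Matrix.rank_of_isUnit _ (Matrix.isUnit_iff_isUnit_det _ |>.mpr (isUnit_iff_ne_zero.mpr h)),
    Fintype.card_fin]

lemma rank_triMat_of_det_eq_zero {x : K} {k : ℕ} (h : (triMat x (k + 1)).det = 0) :
    (triMat x (k + 1)).rank = k := by
  have h1 := rank_triMat_le x k
  have h2 := rank_lt_of_det_eq_zero _ h (Nat.succ_pos k)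
  omega

lemma range_prodMap' {M M' N N' : Type*} [AddCommGroup M] [AddCommGroup M'] [AddCommGroup N]
    [AddCommGroup N'] [Module K M] [Module K M'] [Module K N] [Module K N']
    (f : M →ₗ[K] N) (g : M' →ₗ[K] N') :
    LinearMap.range (f.prodMap g) = (LinearMap.range f).prod (LinearMap.range g) := by
  ext x
  constructor
  · rintro ⟨y, rfl⟩
    exact ⟨⟨y.1, rfl⟩, ⟨y.2, rfl⟩⟩
  · rintro ⟨⟨a, ha⟩, ⟨b, hb⟩⟩
    exact ⟨(a, b), by simp [LinearMap.prodMap_apply, ha, hb, Prod.ext_iff]⟩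

lemma finrank_prod_submodule {M N : Type*} [AddCommGroup M] [AddCommGroup N]
    [Module K M] [Module K N] [FiniteDimensional K M] [FiniteDimensional K N]
    (p : Submodule K M) (q : Submodule K N) :
    Module.finrank K (p.prod q) = Module.finrank K p + Module.finrank K q := by
  have h1 : p.prod q = p.map (LinearMap.inl K M N) ⊔ q.map (LinearMap.inr K M N) := by
    ext ⟨a, b⟩
    simp only [Submodule.mem_prod, Submodule.mem_sup, Submodule.mem_map]
    constructor
    · rintro ⟨ha, hb⟩
      exact ⟨(a, 0), ⟨a, ha, rfl⟩, (0, b), ⟨b, hb, rfl⟩, by simp⟩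
    · rintro ⟨y, ⟨a', ha', rfl⟩, z, ⟨b', hb', rfl⟩, hyz⟩
      simp only [LinearMap.coe_inl, LinearMap.coe_inr, Prod.mk.injEq, Prod.mk_add_mk,
        add_zero, zero_add] at hyz
      exact ⟨hyz.1 ▸ ha', hyz.2 ▸ hb'⟩
  have h2 : p.map (LinearMap.inl K M N) ⊓ q.map (LinearMap.inr K M N) = ⊥ := by
    rw [Submodule.eq_bot_iff]
    rintro ⟨a, b⟩ ⟨⟨a', -, ha⟩, ⟨b', -, hb⟩⟩
    rw [LinearMap.inl_apply] at ha
    rw [LinearMap.inr_apply] at hb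
    injection ha with ha1 ha2
    subst ha1; subst ha2
    injection hb with hb1 hb2
    rw [← hb1]
    rfl
  have e1 : Module.finrank K (p.map (LinearMap.inl K M N)) = Module.finrank K p :=
    (LinearEquiv.finrank_eq (Submodule.equivMapOfInjective _ LinearMap.inl_injective p)).symm
  have e2 : Module.finrank K (q.map (LinearMap.inr K M N)) = Module.finrank K q :=
    (LinearEquiv.finrank_eq (Submodule.equivMapOfInjective _ LinearMap.inr_injective q)).symm
  have hsum := Submodule.finrank_sup_add_finrank_inf_eq
    (p.map (LinearMap.inl K M N)) (q.map (LinearMap.inr K M N))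
  rw [h2, finrank_bot, add_zero, e1, e2] at hsum
  rw [h1, hsum]

lemma rank_fromBlocks_diag {m n : Type*} [Fintype m] [Fintype n]
    (A : Matrix m m K) (D : Matrix n n K) :
    (Matrix.fromBlocks A 0 0 D).rank = A.rank + D.rank := by
  classical
  set e := LinearEquiv.sumArrowLequivProdArrow m n K K with he
  have hcomp : (Matrix.fromBlocks A 0 0 D).mulVecLin =
      (e.symm.toLinearMap ∘ₗ (A.mulVecLin.prodMap D.mulVecLin)) ∘ₗ e.toLinearMap := by
    apply LinearMap.ext
    intro v
    simp only [LinearMap.comp_apply, Matrix.mulVecLin_apply, LinearEquiv.coe_coe,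
      LinearMap.prodMap_apply]
    rw [Matrix.fromBlocks_mulVec]
    simp only [Matrix.zero_mulVec, add_zero, zero_add]
    rfl
  rw [Matrix.rank, hcomp, LinearMap.range_comp_of_range_eq_top _
    (LinearMap.range_eq_top.mpr e.surjective), LinearMap.range_comp]
  rw [LinearEquiv.finrank_map_eq e.symm]
  rw [range_prodMap', finrank_prod_submodule]
  rfl

lemma rank_smul_one {s : ℕ} {c : K} (hc : c ≠ 0) :
    (c • (1 : Matrix (Fin s) (Fin s) K)).rank = s := by
  have : IsUnit (c • (1 : Matrix (Fin s) (Fin s) K)).det := by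
    rw [Matrix.det_smul, Matrix.det_one, mul_one]
    exact (isUnit_iff_ne_zero.mpr hc).pow _
  rw [Matrix.rank_of_isUnit _ (Matrix.isUnit_iff_isUnit_det _ |>.mpr this), Fintype.card_fin]

lemma triMat_add_one (x : K) (k : ℕ) : triMat x k + 1 = triMat (x + 1) k := by
  ext i j
  by_cases h : i = j
  · subst h; simp [triMat, Matrix.one_apply]
  · simp [triMat, Matrix.one_apply, h]

lemma det_triMat_zero_even (j : ℕ) : (triMat (0 : K) (2 * j)).det = (-1) ^ j ∧
    (triMat (0 : K) (2 * j + 1)).det = 0 := by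
  induction j with
  | zero =>
    constructor
    · simp [Matrix.det_fin_zero]
    · rw [show 2 * 0 + 1 = 1 from rfl, Matrix.det_fin_one]
      simp [triMat]
  | succ j ih =>
    constructor
    · rw [show 2 * (j + 1) = 2 * j + 2 by ring, det_triMat_succ_succ, ih.1]
      ring
    · rw [show 2 * (j + 1) + 1 = (2 * j + 1) + 2 by ring, det_triMat_succ_succ, ih.2]
      rw [show (2 * j + 1) + 1 = 2 * (j + 1) by ring]
      ring

end Aux

/-- The Gram matrix of the Motzkin algebra `Mo_n(δ)` for the cell with `n − 2`
through strands, indexed by `Fin (n−1) ⊕ Fin (n−1) ⊕ Fin m` with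
`m = (n−1)(n−2)/2`: the `(1,1)`-block is the tridiagonal matrix with `δ` on the
diagonal and `1` on the off-diagonals, the `(1,2)`- and `(2,1)`-blocks are `δ`
times the identity, the `(2,2)`- and `(3,3)`-blocks are `δ²` times the identity,
and all other blocks vanish. -/
def motzkinGram (K : Type*) [Field K] (n : ℕ) (δ : K) :
    Matrix (Fin (n - 1) ⊕ Fin (n - 1) ⊕ Fin ((n - 1) * (n - 2) / 2))
      (Fin (n - 1) ⊕ Fin (n - 1) ⊕ Fin ((n - 1) * (n - 2) / 2)) K :=
  Matrix.of fun p q =>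
    match p, q with
    | Sum.inl i, Sum.inl j =>
        if i = j then δ
        else if (i : ℕ) + 1 = (j : ℕ) ∨ (j : ℕ) + 1 = (i : ℕ) then (1 : K) else 0
    | Sum.inl i, Sum.inr (Sum.inl j) => if i = j then δ else 0
    | Sum.inr (Sum.inl i), Sum.inl j => if i = j then δ else 0
    | Sum.inr (Sum.inl i), Sum.inr (Sum.inl j) => if i = j then δ ^ 2 else 0
    | Sum.inr (Sum.inr i), Sum.inr (Sum.inr j) => if i = j then δ ^ 2 else 0
    | _, _ => 0

lemma eval_eq_det_triMat {K : Type*} [Field K] (u : ℕ → Polynomial K) (hu0 : u 0 = 1) (hu1 : u 1 = Polynomial.X)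
    (hurec : ∀ k, u (k + 2) = Polynomial.X * u (k + 1) - u k) (y : K) (k : ℕ) :
    (u k).eval y = (triMat y k).det := by
  have H : ∀ k, (u k).eval y = (triMat y k).det ∧ (u (k+1)).eval y = (triMat y (k+1)).det := by
    intro k
    induction k with
    | zero =>
      constructor
      · rw [hu0]; simp [Matrix.det_fin_zero]
      · rw [hu1, Matrix.det_fin_one]; simp [triMat]
    | succ k ih =>
      refine ⟨ih.2, ?_⟩
      rw [hurec k, det_triMat_succ_succ]
      simp [Polynomial.eval_sub, Polynomial.eval_mul, Polynomial.eval_X, ih.1, ih.2]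
  exact (H k).1


/-- Over a field `K` of characteristic `0`, for `n ≥ 2` and
`u : ℕ → K[X]` satisfying the Chebyshev recursion `u 0 = 1`, `u 1 = X`,
`u (k+2) = X·u (k+1) − u k`, the rank of the Motzkin Gram matrix for the cell with
`n − 2` through strands is: `(n² + n − 2)/2` (full rank) if `δ ≠ 0` and
`u_{n−1}(δ−1) ≠ 0`; `(n² + n − 4)/2` if `δ ≠ 0` and `u_{n−1}(δ−1) = 0`; `n − 1` if
`δ = 0` and `n` is odd; and `n − 2` if `δ = 0` and `n` is even. -/
theorem rank_gramMatrix_motzkin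
    {K : Type*} [Field K] [CharZero K] (n : ℕ) (hn : 2 ≤ n) (δ : K)
    (u : ℕ → Polynomial K) (hu0 : u 0 = 1) (hu1 : u 1 = Polynomial.X)
    (hurec : ∀ k, u (k + 2) = Polynomial.X * u (k + 1) - u k) :
    (δ ≠ 0 → (u (n - 1)).eval (δ - 1) ≠ 0 →
      (motzkinGram K n δ).rank = (n ^ 2 + n - 2) / 2) ∧
    (δ ≠ 0 → (u (n - 1)).eval (δ - 1) = 0 →
      (motzkinGram K n δ).rank = (n ^ 2 + n - 4) / 2) ∧
    (δ = 0 → Odd n → (motzkinGram K n δ).rank = n - 1) ∧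
    (δ = 0 → Even n → (motzkinGram K n δ).rank = n - 2) := by
  set N := n - 1 with hN
  set m := (n - 1) * (n - 2) / 2 with hm
  set e : Fin N ⊕ (Fin N ⊕ Fin m) ≃ (Fin N ⊕ Fin N) ⊕ Fin m :=
    (Equiv.sumAssoc (Fin N) (Fin N) (Fin m)).symm with he
  set inner : Matrix (Fin N ⊕ Fin N) (Fin N ⊕ Fin N) K :=
    Matrix.fromBlocks (triMat δ N) (δ • 1) (δ • 1) ((δ ^ 2) • 1) with hinner
  have hM : motzkinGram K n δ =
      (Matrix.fromBlocks inner 0 0 ((δ ^ 2) • (1 : Matrix (Fin m) (Fin m) K))).submatrix e e := by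
    ext p q
    rcases p with i | (i | i) <;> rcases q with j | (j | j) <;>
      simp [motzkinGram, triMat, hinner, he, Equiv.sumAssoc, Matrix.one_apply, mul_ite, mul_one, mul_zero]
  have hrank0 : (motzkinGram K n δ).rank =
      inner.rank + ((δ ^ 2) • (1 : Matrix (Fin m) (Fin m) K)).rank := by
    rw [hM, Matrix.rank_submatrix, rank_fromBlocks_diag]
  -- δ ≠ 0 reduction
  have hδcase : ∀ hδ : δ ≠ 0, (motzkinGram K n δ).rank = (triMat (δ - 1) N).rank + N + m := by
    intro hδ
    set L : Matrix (Fin N ⊕ Fin N) (Fin N ⊕ Fin N) K :=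
      Matrix.fromBlocks 1 (δ⁻¹ • 1) 0 1 with hL
    set R : Matrix (Fin N ⊕ Fin N) (Fin N ⊕ Fin N) K :=
      Matrix.fromBlocks 1 0 (δ⁻¹ • 1) 1 with hR
    set D₂ : Matrix (Fin N ⊕ Fin N) (Fin N ⊕ Fin N) K :=
      Matrix.fromBlocks (triMat (δ - 1) N) 0 0 ((δ ^ 2) • 1) with hD₂
    have hfact : L * D₂ * R = inner := by
      rw [hL, hR, hD₂, hinner, Matrix.fromBlocks_multiply, Matrix.fromBlocks_multiply]
      have hs : δ⁻¹ * δ ^ 2 = δ := by field_simp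
      have hs2 : δ ^ 2 * δ⁻¹ = δ := by field_simp
      simp only [Matrix.mul_one, Matrix.one_mul, Matrix.mul_zero, Matrix.zero_mul,
        Matrix.smul_mul, Matrix.mul_smul, smul_smul, hs, hs2, add_zero, zero_add,
        Matrix.zero_mul, Matrix.mul_zero, one_mul, mul_one]
      rw [inv_mul_cancel₀ hδ, one_smul, triMat_add_one, sub_add_cancel]
    have hdetL : IsUnit L.det := by
      rw [hL, Matrix.det_fromBlocks_zero₂₁]
      simp
    have hdetR : IsUnit R.det := by
      rw [hR, Matrix.det_fromBlocks_zero₁₂]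
      simp
    have hrankinner : inner.rank = (triMat (δ - 1) N).rank + N := by
      rw [← hfact, Matrix.rank_mul_eq_left_of_isUnit_det _ _ hdetR,
        Matrix.rank_mul_eq_right_of_isUnit_det _ _ hdetL, hD₂, rank_fromBlocks_diag,
        rank_smul_one (pow_ne_zero 2 hδ)]
    rw [hrank0, hrankinner, rank_smul_one (pow_ne_zero 2 hδ)]
  -- arithmetic setup
  obtain ⟨k, rfl⟩ : ∃ k, n = k + 2 := ⟨n - 2, by omega⟩
  have hNk : N = k + 1 := by omega
  have hdetlink : (u (k + 2 - 1)).eval (δ - 1) = (triMat (δ - 1) N).det := by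
    rw [eval_eq_det_triMat u hu0 hu1 hurec, hNk, show k + 2 - 1 = k + 1 from by omega]
  refine ⟨?_, ?_, ?_, ?_⟩
  · intro hδ hne
    rw [hδcase hδ, rank_triMat_of_det_ne_zero (by rw [← hdetlink]; exact hne)]
    have e1 : (k+2) ^ 2 + (k+2) = k * k + 5 * k + 6 := by ring
    have e2 : m = (k + 1) * k / 2 := by rw [hm]; norm_num
    have e3 : (k + 1) * k = k * k + k := by ring
    rw [e1, e2, e3]
    omega
  · intro hδ heq
    rw [hδcase hδ, hNk, rank_triMat_of_det_eq_zero (by rw [← hNk, ← hdetlink]; exact heq)]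
    have e1 : (k+2) ^ 2 + (k+2) = k * k + 5 * k + 6 := by ring
    have e2 : m = (k + 1) * k / 2 := by rw [hm]; norm_num
    have e3 : (k + 1) * k = k * k + k := by ring
    rw [e1, e2, e3]
    have hk1 : N = k + 1 := hNk
    omega
  · intro hδ hodd
    subst hδ
    have hz : ((0:K) ^ 2) • (1 : Matrix (Fin m) (Fin m) K) = 0 := by simp
    have hz' : ((0:K) ^ 2) • (1 : Matrix (Fin N) (Fin N) K) = 0 := by simp
    have hz'' : (0:K) • (1 : Matrix (Fin N) (Fin N) K) = 0 := by simp
    have hinner0 : inner.rank = (triMat (0:K) N).rank := by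
      rw [hinner, hz', hz'', rank_fromBlocks_diag, Matrix.rank_zero, add_zero]
    rw [hrank0, hz, Matrix.rank_zero, add_zero, hinner0]
    obtain ⟨r, hr⟩ := hodd
    have : N = 2 * r := by omega
    rw [this, rank_triMat_of_det_ne_zero (by
      rw [(det_triMat_zero_even (K := K) r).1]
      exact pow_ne_zero _ (neg_ne_zero.mpr one_ne_zero))]
    omega
  · intro hδ heven
    subst hδ
    have hz : ((0:K) ^ 2) • (1 : Matrix (Fin m) (Fin m) K) = 0 := by simp
    have hz' : ((0:K) ^ 2) • (1 : Matrix (Fin N) (Fin N) K) = 0 := by simp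
    have hz'' : (0:K) • (1 : Matrix (Fin N) (Fin N) K) = 0 := by simp
    have hinner0 : inner.rank = (triMat (0:K) N).rank := by
      rw [hinner, hz', hz'', rank_fromBlocks_diag, Matrix.rank_zero, add_zero]
    rw [hrank0, hz, Matrix.rank_zero, add_zero, hinner0]
    obtain ⟨r, hr⟩ := heven
    have hr' : N = 2 * (r - 1) + 1 := by omega
    rw [hr', rank_triMat_of_det_eq_zero (det_triMat_zero_even (K := K) (r - 1)).2]
    omega
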